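/- Let m > 0, let O, v_O, ω : ℝ → ℝ³ be differentiable with O'(t) = v_O(t), and define the total generalized potential U(t,x,v) = m v_O(t) · v + m (ω(t) × (x − O(t))) · v + m v_O(t) · (ω(t) × (x − O(t))) + (m/2) ‖ω(t) × (x − O(t))‖² on ℝ × ℝ³ × ℝ³. Then for every twice differentiable curve x : ℝ → ℝ³ and every t ∈ ℝ, ∇_x U(t, x(t), ẋ(t)) − d/dt [∇_v U(t, x(t), ẋ(t))] = −m [ v_O'(t) + ω'(t) × (x(t) − O(t)) + ω(t) × (ω(t) × (x(t) − O(t))) ] − 2m ω(t) × ẋ(t); that is, the Euler–Lagrange generalized force of U is exactly the sum of the dragging force −m a_τ and the Coriolis force −2m ω × ẋ. -/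

import Mathlib

/-!
`U` is affine in the velocity, with `∇ᵥU = m (v_O + ω × (x − O))`, so its time derivative along
the curve is `m (a_O + ω' × (x − O) + ω × (ẋ − v_O))`. In the position `U` depends on `x` only
through `r = ω × (x − O)`, and by the triple product the adjoint of `h ↦ ω × h` is `G ↦ G × ω`;
hence `∇ₓU = m (ẋ + v_O + r) × ω`. After anticommutativity the two `ω × v_O` terms cancel and
the two `ω × ẋ` terms add up to the Coriolis force.
-/

noncomputable section
open scoped RealInnerProductSpace

/-- Euclidean 3-space. -/
abbrev E3 : Type := EuclideanSpace ℝ (Fin 3)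

/-- Constructor for vectors in `E3` from three coordinates. -/
def vec3 (a b c : ℝ) : E3 := (WithLp.equiv 2 (Fin 3 → ℝ)).symm ![a, b, c]

/-- The cross product on `E3`. -/
def cross3 (a b : E3) : E3 :=
  vec3 (a 1 * b 2 - a 2 * b 1) (a 2 * b 0 - a 0 * b 2) (a 0 * b 1 - a 1 * b 0)

/-- `pderiv3 F j x i` is the partial derivative `∂_j F_i` at `x`. -/
def pderiv3 (F : E3 → E3) (j : Fin 3) (x : E3) (i : Fin 3) : ℝ :=
  fderiv ℝ F x (EuclideanSpace.single j 1) i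

/-- The curl `∇ × F` of a vector field on `E3`:
`(∇×F)_1 = ∂_2 F_3 − ∂_3 F_2`, `(∇×F)_2 = ∂_3 F_1 − ∂_1 F_3`, `(∇×F)_3 = ∂_1 F_2 − ∂_2 F_1`
(written here with 0-based indices). -/
def curl3 (F : E3 → E3) (x : E3) : E3 :=
  vec3 (pderiv3 F 1 x 2 - pderiv3 F 2 x 1)
       (pderiv3 F 2 x 0 - pderiv3 F 0 x 2)
       (pderiv3 F 0 x 1 - pderiv3 F 1 x 0)

/-- The divergence `∇ · F = ∂_1 F_1 + ∂_2 F_2 + ∂_3 F_3` of a vector field on `E3`. -/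
def div3 (F : E3 → E3) (x : E3) : ℝ :=
  pderiv3 F 0 x 0 + pderiv3 F 1 x 1 + pderiv3 F 2 x 2

open WithLp Matrix

theorem cross3_eq_crossProduct (a b : E3) : cross3 a b = toLp 2 (ofLp a ⨯₃ ofLp b) := by
  ext i; fin_cases i <;> rfl

theorem cross3_anticomm (a b : E3) : cross3 b a = -cross3 a b := by
  rw [cross3_eq_crossProduct, cross3_eq_crossProduct, ← cross_anticomm, toLp_neg]

theorem inner_cross3_left (a b c : E3) : ⟪cross3 a b, c⟫ = ⟪cross3 b c, a⟫ := by
  simp only [EuclideanSpace.inner_eq_star_dotProduct, cross3_eq_crossProduct, star_trivial]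
  exact triple_product_permutation _ _ _

def crossCLM : E3 →L[ℝ] E3 →L[ℝ] E3 :=
  let e := (WithLp.linearEquiv 2 ℝ (Fin 3 → ℝ)).toLinearMap
  LinearMap.toContinuousLinearMap <| LinearMap.toContinuousLinearMap.toLinearMap ∘ₗ
    (((crossProduct (R := ℝ)).compl₁₂ e e).compr₂
      (WithLp.linearEquiv 2 ℝ (Fin 3 → ℝ)).symm.toLinearMap)

@[simp] theorem crossCLM_apply (a b : E3) : crossCLM a b = cross3 a b :=
  (cross3_eq_crossProduct a b).symm

theorem cross3_add_right (a b c : E3) : cross3 a (b + c) = cross3 a b + cross3 a c := by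
  simp only [← crossCLM_apply, map_add]

theorem cross3_sub_right (a b c : E3) : cross3 a (b - c) = cross3 a b - cross3 a c := by
  simp only [← crossCLM_apply, map_sub]

theorem HasDerivAt.cross3 {f g : ℝ → E3} {f' g' : E3} {s : ℝ}
    (hf : HasDerivAt f f' s) (hg : HasDerivAt g g' s) :
    HasDerivAt (fun s => cross3 (f s) (g s)) (cross3 f' (g s) + cross3 (f s) g') s := by
  simpa [add_comm] using crossCLM.hasDerivAt_of_bilinear (fun _ => hf) (fun _ => hg)

theorem HasFDerivAt.hasGradientAt_of_apply_eq_inner {F : Type*} [NormedAddCommGroup F]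
    [InnerProductSpace ℝ F] [CompleteSpace F] {f : F → ℝ} {f' : F →L[ℝ] ℝ} {g x : F}
    (hf : HasFDerivAt f f' x) (h : ∀ y, f' y = ⟪g, y⟫) : HasGradientAt f g x := by
  rw [hasGradientAt_iff_hasFDerivAt, show InnerProductSpace.toDual ℝ F g = f' by ext; simp [h]]
  exact hf

/-- The paper's `U(t, ·, ·)`, with the frame data `v_O(t)`, `ω(t)`, `O(t)` at a fixed time. -/
def inertialPotential (m : ℝ) (vO ω O y v : E3) : ℝ :=
  m * ⟪vO, v⟫ + m * ⟪cross3 ω (y - O), v⟫ + m * ⟪vO, cross3 ω (y - O)⟫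
    + m / 2 * ‖cross3 ω (y - O)‖ ^ 2

theorem hasGradientAt_inertialPotential_velocity (m : ℝ) (vO ω O y v : E3) :
    HasGradientAt (inertialPotential m vO ω O y) (m • (vO + cross3 ω (y - O))) v := by
  have hlin : HasFDerivAt (fun w => m * ⟪vO, w⟫ + m * ⟪cross3 ω (y - O), w⟫)
      (m • innerSL ℝ vO + m • innerSL ℝ (cross3 ω (y - O))) v :=
    ((innerSL ℝ vO).hasFDerivAt.const_smul m).add
      ((innerSL ℝ (cross3 ω (y - O))).hasFDerivAt.const_smul m)
  refine (hlin.add_const _ |>.add_const _).hasGradientAt_of_apply_eq_inner fun w => ?_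
  simp [inner_add_left, real_inner_smul_left]

theorem hasGradientAt_inertialPotential_position (m : ℝ) (vO ω O y v : E3) :
    HasGradientAt (fun z => inertialPotential m vO ω O z v)
      (m • cross3 (v + vO + cross3 ω (y - O)) ω) y := by
  have hr : HasFDerivAt (fun z => cross3 ω (z - O)) (crossCLM ω) y :=
    (crossCLM ω).hasFDerivAt.comp y ((hasFDerivAt_id y).sub_const O)
  have hfderiv := (((hasFDerivAt_const (m * ⟪vO, v⟫) y).add
    ((hr.inner ℝ (hasFDerivAt_const v y)).const_mul m)).add
    (((hasFDerivAt_const vO y).inner ℝ hr).const_mul m)).add (hr.norm_sq.const_mul (m / 2))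
  refine hfderiv.hasGradientAt_of_apply_eq_inner fun h => ?_
  simp [fderivInnerCLM_apply, real_inner_smul_left, inner_cross3_left _ ω h, inner_add_right,
    real_inner_comm (cross3 ω h), mul_add, ← mul_assoc]

theorem EL_force_of_total_generalized_potential_general (m : ℝ) (O vO ω : ℝ → E3)
    (hO : Differentiable ℝ O) (hvO : Differentiable ℝ vO) (hω : Differentiable ℝ ω)
    (hO' : ∀ t, deriv O t = vO t)
    (U : ℝ → E3 → E3 → ℝ)
    (hU : ∀ t x v, U t x v = m * ⟪vO t, v⟫ + m * ⟪cross3 (ω t) (x - O t), v⟫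
        + m * ⟪vO t, cross3 (ω t) (x - O t)⟫ + (m / 2) * ‖cross3 (ω t) (x - O t)‖ ^ 2)
    (x : ℝ → E3) (hx : Differentiable ℝ x) (t : ℝ) :
    gradient (fun y => U t y (deriv x t)) (x t)
        - deriv (fun s => gradient (fun w => U s (x s) w) (deriv x s)) t
      = -(m • (deriv vO t + cross3 (deriv ω t) (x t - O t)
            + cross3 (ω t) (cross3 (ω t) (x t - O t))))
        - (2 * m) • cross3 (ω t) (deriv x t) := by
  have hU_eq : ∀ t, U t = inertialPotential m (vO t) (ω t) (O t) := fun t => funext₂ (hU t)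
  have hgrad_vel : (fun s => gradient (fun w => U s (x s) w) (deriv x s))
      = fun s => m • (vO s + cross3 (ω s) (x s - O s)) :=
    funext fun s => hU_eq s ▸ (hasGradientAt_inertialPotential_velocity _ _ _ _ _ _).gradient
  have hrel : HasDerivAt (fun s => x s - O s) (deriv x t - vO t) t :=
    hO' t ▸ (hx t).hasDerivAt.sub (hO t).hasDerivAt
  have hmomentum : HasDerivAt (fun s => m • (vO s + cross3 (ω s) (x s - O s)))
      (m • (deriv vO t + (cross3 (deriv ω t) (x t - O t) + cross3 (ω t) (deriv x t - vO t)))) t :=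
    ((hvO t).hasDerivAt.add ((hω t).hasDerivAt.cross3 hrel)).const_smul m
  rw [hU_eq, (hasGradientAt_inertialPotential_position _ _ _ _ _ _).gradient, hgrad_vel,
    hmomentum.deriv]
  simp only [cross3_anticomm (ω t), cross3_add_right, cross3_sub_right]
  module

/-- The total generalized potential
`U(t,x,v) = m v_O · v + m (ω × (x − O)) · v + m v_O · (ω × (x − O)) + (m/2)‖ω × (x − O)‖²`
produces, via the Euler–Lagrange combination `∇ₓU − d/dt(∇ᵥU)` along any twice
differentiable curve, exactly the sum of the dragging force
`−m [a_O + ω' × (x − O) + ω × (ω × (x − O))]` and the Coriolis force `−2m ω × ẋ`. -/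
theorem EL_force_of_total_generalized_potential (m : ℝ) (hm : 0 < m) (O vO ω : ℝ → E3)
    (hO : Differentiable ℝ O) (hvO : Differentiable ℝ vO) (hω : Differentiable ℝ ω)
    (hO' : ∀ t, deriv O t = vO t)
    (U : ℝ → E3 → E3 → ℝ)
    (hU : ∀ t x v, U t x v = m * ⟪vO t, v⟫ + m * ⟪cross3 (ω t) (x - O t), v⟫
        + m * ⟪vO t, cross3 (ω t) (x - O t)⟫ + (m / 2) * ‖cross3 (ω t) (x - O t)‖ ^ 2)
    (x : ℝ → E3) (hx : Differentiable ℝ x) (hx' : Differentiable ℝ (deriv x)) (t : ℝ) :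
    gradient (fun y => U t y (deriv x t)) (x t)
        - deriv (fun s => gradient (fun w => U s (x s) w) (deriv x s)) t
      = -(m • (deriv vO t + cross3 (deriv ω t) (x t - O t)
            + cross3 (ω t) (cross3 (ω t) (x t - O t))))
        - (2 * m) • cross3 (ω t) (deriv x t) :=
  EL_force_of_total_generalized_potential_general m O vO ω hO hvO hω hO' U hU x hx t
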